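/- Adjusted orthogonality satisfies the contraction property of a generalised conditional independence relation: let B, C, D, E be random vectors and let (D,E) denote the stacked random vector whose components are those of D followed by those of E. If Cov_E(B,D) = 0 and Cov_{(D,E)}(B,C) = 0, then Cov_E(B,C) = 0, where each subscripted operator uses the Moore–Penrose inverse of the corresponding variance matrix. -/

import Mathlib

/-!
If `W` is a generalised inverse of `V = Var(Z)`, then `Cov(X,Z) W V = Cov(X,Z)`: a vector `u`
with `V u = 0` makes `uᵀZ` a random variable of variance zero, hence almost surely constant and
uncorrelated with every `Xᵢ`, so `Cov(X,Z) u = 0`. Consequently the residual `X − E_Z(X)` is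
uncorrelated with `Z`, and the adjusted covariance takes its Schur-complement form
`Cov_Z(X,Y) = Cov(X,Y) − Cov(X,Z) W Cov(Z,Y)`.

In this form, with `F = (D,E)`, the hypotheses read `Cov(B,D) = Cov(B,E) W_E Cov(E,D)` and
`Cov(B,C) = Cov(B,F) W_F Cov(F,C)`. Since also `Cov(B,E) = Cov(B,E) W_E Var(E)`, the first gives
`Cov(B,F) = Cov(B,E) W_E Cov(E,F)`; and `Cov(E,F) W_F Cov(F,C) = Cov(E,C)` because `E` is a block
of `F`. Substituting both into the second yields `Cov(B,C) = Cov(B,E) W_E Cov(E,C)`.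
-/

open MeasureTheory Matrix

variable {Ω : Type*}

/-- The covariance matrix of two random vectors `B` (dimension `m`) and `D` (dimension `n`):
the `(i,j)` entry is `E[Bᵢ·Dⱼ] − E[Bᵢ]·E[Dⱼ]`. -/
noncomputable def cov [MeasurableSpace Ω] (μ : Measure Ω) {m n : ℕ}
    (B : Fin m → Ω → ℝ) (D : Fin n → Ω → ℝ) : Matrix (Fin m) (Fin n) ℝ :=
  Matrix.of fun i j =>
    (∫ ω, B i ω * D j ω ∂μ) - (∫ ω, B i ω ∂μ) * (∫ ω, D j ω ∂μ)

/-- `W` is a Moore–Penrose inverse of `V`. -/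
def IsMoorePenrose {m n : ℕ} (V : Matrix (Fin m) (Fin n) ℝ)
    (W : Matrix (Fin n) (Fin m) ℝ) : Prop :=
  V * W * V = V ∧ W * V * W = W ∧ (V * W)ᵀ = V * W ∧ (W * V)ᵀ = W * V

/-- The adjusted expectation `E_D(B)` (computed with the matrix `W`, intended to be the
Moore–Penrose inverse of `Var(D)`): the `i`-th component is
`E[Bᵢ] + Σ_j (Cov(B,D)·W)_{ij}·(Dⱼ − E[Dⱼ])`. -/
noncomputable def adjExp [MeasurableSpace Ω] (μ : Measure Ω) {m n : ℕ}
    (B : Fin m → Ω → ℝ) (D : Fin n → Ω → ℝ)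
    (W : Matrix (Fin n) (Fin n) ℝ) : Fin m → Ω → ℝ :=
  fun i ω => (∫ ω', B i ω' ∂μ) + ∑ j, (cov μ B D * W) i j * (D j ω - ∫ ω', D j ω' ∂μ)

/-- The adjusted covariance `Cov_D(B,C) = Cov(B − E_D(B), C − E_D(C))`. -/
noncomputable def adjCov [MeasurableSpace Ω] (μ : Measure Ω) {m p n : ℕ}
    (B : Fin m → Ω → ℝ) (C : Fin p → Ω → ℝ) (D : Fin n → Ω → ℝ)
    (W : Matrix (Fin n) (Fin n) ℝ) : Matrix (Fin m) (Fin p) ℝ :=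
  cov μ (fun i ω => B i ω - adjExp μ B D W i ω) (fun j ω => C j ω - adjExp μ C D W j ω)

open ProbabilityTheory

section Covariance

variable [MeasurableSpace Ω] {μ : Measure Ω} {m n p : ℕ}

lemma cov_transpose (X : Fin m → Ω → ℝ) (Y : Fin n → Ω → ℝ) : (cov μ X Y)ᵀ = cov μ Y X := by
  ext i j
  simp only [transpose_apply, cov, of_apply, mul_comm]

lemma cov_apply_eq_covariance [IsProbabilityMeasure μ] {X : Fin m → Ω → ℝ} {Y : Fin n → Ω → ℝ}
    {i : Fin m} {j : Fin n} (hX : MemLp (X i) 2 μ) (hY : MemLp (Y j) 2 μ) :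
    cov μ X Y i j = cov[X i, Y j; μ] := by
  rw [covariance_eq_sub hX hY]
  rfl

lemma cov_sub_left [IsProbabilityMeasure μ] {X X' : Fin m → Ω → ℝ} {Y : Fin n → Ω → ℝ}
    (hX : ∀ i, MemLp (X i) 2 μ) (hX' : ∀ i, MemLp (X' i) 2 μ) (hY : ∀ j, MemLp (Y j) 2 μ) :
    cov μ (fun i ω => X i ω - X' i ω) Y = cov μ X Y - cov μ X' Y := by
  ext i j
  rw [Matrix.sub_apply, cov_apply_eq_covariance ((hX i).sub (hX' i)) (hY j),
    cov_apply_eq_covariance (hX i) (hY j), cov_apply_eq_covariance (hX' i) (hY j),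
    covariance_fun_sub_left (hX i) (hX' i) (hY j)]

lemma covariance_eq_zero_of_variance_eq_zero [IsFiniteMeasure μ] {X Y : Ω → ℝ}
    (hY : MemLp Y 2 μ) (h : Var[Y; μ] = 0) : cov[X, Y; μ] = 0 := by
  refine integral_eq_zero_of_ae ?_
  filter_upwards [ae_eq_integral_of_variance_eq_zero hY h] with ω hω
  simp [hω]

lemma cov_mul_eq_zero_of_cov_self_mul_eq_zero [IsProbabilityMeasure μ] {X : Fin m → Ω → ℝ}
    {Z : Fin n → Ω → ℝ} (hX : ∀ i, MemLp (X i) 2 μ) (hZ : ∀ k, MemLp (Z k) 2 μ)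
    {M : Matrix (Fin n) (Fin p) ℝ} (hM : cov μ Z Z * M = 0) : cov μ X Z * M = 0 := by
  ext i j
  set S : Ω → ℝ := fun ω => ∑ k, Z k ω * M k j
  have hS : MemLp S 2 μ := memLp_finsetSum _ fun k _ => (hZ k).mul_const _
  have cov_S : ∀ Y : Ω → ℝ, MemLp Y 2 μ → cov[Y, S; μ] = ∑ k, cov[Y, Z k; μ] * M k j := by
    intro Y hY
    rw [covariance_fun_sum_right (fun k => (hZ k).mul_const _) hY]
    simp only [covariance_mul_const_right]
  have hVar : Var[S; μ] = 0 := by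
    have hZS : ∀ k, cov[S, Z k; μ] = 0 := fun k => by
      have hMkj := congr_fun (congr_fun hM k) j
      rw [mul_apply] at hMkj
      simp only [cov_apply_eq_covariance (hZ k) (hZ _)] at hMkj
      rw [covariance_comm, cov_S _ (hZ k), hMkj, Matrix.zero_apply]
    rw [← covariance_self hS.aemeasurable, cov_S S hS]
    simp [hZS]
  rw [mul_apply, Matrix.zero_apply]
  simp only [cov_apply_eq_covariance (hX i) (hZ _)]
  rw [← cov_S _ (hX i)]
  exact covariance_eq_zero_of_variance_eq_zero hS hVar

lemma mul_cov_eq_zero_of_mul_cov_self_eq_zero [IsProbabilityMeasure μ] {Z : Fin n → Ω → ℝ}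
    {Y : Fin m → Ω → ℝ} (hZ : ∀ k, MemLp (Z k) 2 μ) (hY : ∀ j, MemLp (Y j) 2 μ)
    {M : Matrix (Fin p) (Fin n) ℝ} (hM : M * cov μ Z Z = 0) : M * cov μ Z Y = 0 := by
  have hMt : cov μ Z Z * Mᵀ = 0 := by
    rw [← cov_transpose, ← transpose_mul, hM, transpose_zero]
  rw [← transpose_transpose (M * _), transpose_mul, cov_transpose,
    cov_mul_eq_zero_of_cov_self_mul_eq_zero hY hZ hMt, transpose_zero]

end Covariance

section MoorePenrose

variable [MeasurableSpace Ω] {μ : Measure Ω} [IsProbabilityMeasure μ] {m n : ℕ}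
  {Z : Fin n → Ω → ℝ} {W : Matrix (Fin n) (Fin n) ℝ}

lemma IsMoorePenrose.cov_mul_mul_cov_self {X : Fin m → Ω → ℝ} (hW : IsMoorePenrose (cov μ Z Z) W)
    (hX : ∀ i, MemLp (X i) 2 μ) (hZ : ∀ k, MemLp (Z k) 2 μ) :
    cov μ X Z * W * cov μ Z Z = cov μ X Z := by
  have h := cov_mul_eq_zero_of_cov_self_mul_eq_zero hX hZ (M := W * cov μ Z Z - 1)
    (by rw [Matrix.mul_sub, ← Matrix.mul_assoc, hW.1, Matrix.mul_one, sub_self])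
  rwa [Matrix.mul_sub, Matrix.mul_one, sub_eq_zero, ← Matrix.mul_assoc] at h

lemma IsMoorePenrose.cov_self_mul_mul_cov {Y : Fin m → Ω → ℝ} (hW : IsMoorePenrose (cov μ Z Z) W)
    (hZ : ∀ k, MemLp (Z k) 2 μ) (hY : ∀ j, MemLp (Y j) 2 μ) :
    cov μ Z Z * W * cov μ Z Y = cov μ Z Y := by
  have h := mul_cov_eq_zero_of_mul_cov_self_eq_zero hZ hY (M := cov μ Z Z * W - 1)
    (by rw [Matrix.sub_mul, hW.1, Matrix.one_mul, sub_self])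
  rwa [Matrix.sub_mul, Matrix.one_mul, sub_eq_zero] at h

lemma IsMoorePenrose.cov_comp_mul_mul_cov {k : ℕ} {Y : Fin m → Ω → ℝ}
    (hW : IsMoorePenrose (cov μ Z Z) W) (hZ : ∀ k, MemLp (Z k) 2 μ) (hY : ∀ j, MemLp (Y j) 2 μ)
    (r : Fin k → Fin n) :
    cov μ (Z ∘ r) Z * W * cov μ Z Y = cov μ (Z ∘ r) Y := by
  have h := congr_arg (fun M => M.submatrix r id) (hW.cov_self_mul_mul_cov hZ hY)
  simp only [submatrix_mul _ _ r id id Function.bijective_id, submatrix_id_id] at h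
  exact h

end MoorePenrose

section AdjustedExpectation

variable [MeasurableSpace Ω] {μ : Measure Ω} [IsProbabilityMeasure μ] {m n p : ℕ}
  {X : Fin m → Ω → ℝ} {Y : Fin p → Ω → ℝ} {Z : Fin n → Ω → ℝ} {W : Matrix (Fin n) (Fin n) ℝ}

noncomputable def adjResid (μ : Measure Ω) (X : Fin m → Ω → ℝ) (Z : Fin n → Ω → ℝ)
    (W : Matrix (Fin n) (Fin n) ℝ) : Fin m → Ω → ℝ :=
  fun i ω => X i ω - adjExp μ X Z W i ω

lemma memLp_adjExp (hZ : ∀ k, MemLp (Z k) 2 μ) (i : Fin m) : MemLp (adjExp μ X Z W i) 2 μ :=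
  (memLp_const (∫ ω, X i ω ∂μ)).add <|
    memLp_finsetSum _ fun k _ => ((hZ k).sub (memLp_const (∫ ω, Z k ω ∂μ))).const_mul _

lemma memLp_adjResid (hX : ∀ i, MemLp (X i) 2 μ) (hZ : ∀ k, MemLp (Z k) 2 μ) (i : Fin m) :
    MemLp (adjResid μ X Z W i) 2 μ :=
  (hX i).sub (memLp_adjExp hZ i)

lemma cov_adjExp_left (hZ : ∀ k, MemLp (Z k) 2 μ) (hY : ∀ j, MemLp (Y j) 2 μ) :
    cov μ (adjExp μ X Z W) Y = cov μ X Z * W * cov μ Z Y := by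
  ext i j
  have hZc : ∀ k, MemLp (fun ω => Z k ω - ∫ ω', Z k ω' ∂μ) 2 μ :=
    fun k => (hZ k).sub (memLp_const _)
  rw [cov_apply_eq_covariance (memLp_adjExp hZ i) (hY j), mul_apply]
  unfold adjExp
  rw [covariance_const_add_left
      ((memLp_finsetSum _ fun k _ => (hZc k).const_mul _).integrable one_le_two),
    covariance_fun_sum_left (fun k => (hZc k).const_mul _) (hY j)]
  refine Finset.sum_congr rfl fun k _ => ?_
  rw [covariance_const_mul_left, covariance_sub_const_left ((hZ k).integrable one_le_two),
    cov_apply_eq_covariance (hZ k) (hY j)]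

lemma cov_adjResid_left (hX : ∀ i, MemLp (X i) 2 μ) (hY : ∀ j, MemLp (Y j) 2 μ)
    (hZ : ∀ k, MemLp (Z k) 2 μ) :
    cov μ (adjResid μ X Z W) Y = cov μ X Y - cov μ X Z * W * cov μ Z Y := by
  rw [← cov_adjExp_left hZ hY]
  exact cov_sub_left hX (memLp_adjExp hZ) hY

lemma cov_adjResid_right (hX : ∀ i, MemLp (X i) 2 μ) (hY : ∀ j, MemLp (Y j) 2 μ)
    (hZ : ∀ k, MemLp (Z k) 2 μ) :
    cov μ Y (adjResid μ X Z W) = cov μ Y X - cov μ Y Z * Wᵀ * cov μ Z X := by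
  rw [← cov_transpose, cov_adjResid_left hX hY hZ, transpose_sub, transpose_mul, transpose_mul,
    cov_transpose, cov_transpose, cov_transpose, Matrix.mul_assoc]

lemma IsMoorePenrose.cov_adjResid_eq_zero (hW : IsMoorePenrose (cov μ Z Z) W)
    (hX : ∀ i, MemLp (X i) 2 μ) (hZ : ∀ k, MemLp (Z k) 2 μ) :
    cov μ (adjResid μ X Z W) Z = 0 := by
  rw [cov_adjResid_left hX hZ hZ, hW.cov_mul_mul_cov_self hX hZ, sub_self]

lemma IsMoorePenrose.adjCov_eq_cov_sub (hW : IsMoorePenrose (cov μ Z Z) W)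
    (hX : ∀ i, MemLp (X i) 2 μ) (hY : ∀ j, MemLp (Y j) 2 μ) (hZ : ∀ k, MemLp (Z k) 2 μ) :
    adjCov μ X Y Z W = cov μ X Y - cov μ X Z * W * cov μ Z Y := by
  change cov μ (adjResid μ X Z W) (adjResid μ Y Z W) = _
  rw [cov_adjResid_right hY (memLp_adjResid hX hZ) hZ,
    hW.cov_adjResid_eq_zero hX hZ, Matrix.zero_mul, Matrix.zero_mul, sub_zero,
    cov_adjResid_left hX hY hZ]

end AdjustedExpectation

lemma cov_append_right_eq_mul [MeasurableSpace Ω] {μ : Measure Ω} {m k md me : ℕ}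
    {X : Fin m → Ω → ℝ} {Y : Fin k → Ω → ℝ} {D : Fin md → Ω → ℝ} {E : Fin me → Ω → ℝ}
    {A : Matrix (Fin m) (Fin k) ℝ} (hD : cov μ X D = A * cov μ Y D)
    (hE : cov μ X E = A * cov μ Y E) :
    cov μ X (Fin.append D E) = A * cov μ Y (Fin.append D E) := by
  ext i j
  refine Fin.addCases (fun j => ?_) (fun j => ?_) j
  · simpa [cov, mul_apply] using congr_fun (congr_fun hD i) j
  · simpa [cov, mul_apply] using congr_fun (congr_fun hE i) j

/-- contraction: if `Cov_E(B,D) = 0` and `Cov_{(D,E)}(B,C) = 0`, then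
`Cov_E(B,C) = 0`, where `(D,E)` is the stacked vector `Fin.append D E` and each
subscripted operator uses the Moore–Penrose inverse of the corresponding variance matrix. -/
theorem adjOrth_contraction [MeasurableSpace Ω] (μ : Measure Ω) [IsProbabilityMeasure μ]
    {mb mc md me : ℕ} (B : Fin mb → Ω → ℝ) (C : Fin mc → Ω → ℝ)
    (D : Fin md → Ω → ℝ) (E : Fin me → Ω → ℝ)
    (hB : ∀ i, Measurable (B i) ∧ MemLp (B i) 2 μ)
    (hC : ∀ i, Measurable (C i) ∧ MemLp (C i) 2 μ)
    (hD : ∀ i, Measurable (D i) ∧ MemLp (D i) 2 μ)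
    (hE : ∀ i, Measurable (E i) ∧ MemLp (E i) 2 μ)
    (WE : Matrix (Fin me) (Fin me) ℝ) (hWE : IsMoorePenrose (cov μ E E) WE)
    (WDE : Matrix (Fin (md + me)) (Fin (md + me)) ℝ)
    (hWDE : IsMoorePenrose (cov μ (Fin.append D E) (Fin.append D E)) WDE)
    (hBD : adjCov μ B D E WE = 0) (hBC : adjCov μ B C (Fin.append D E) WDE = 0) :
    adjCov μ B C E WE = 0 := by
  replace hB := fun i => (hB i).2
  replace hC := fun i => (hC i).2
  replace hD := fun i => (hD i).2
  replace hE := fun i => (hE i).2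
  have hDE : ∀ i, MemLp (Fin.append D E i) 2 μ :=
    Fin.addCases (by simpa using hD) (by simpa using hE)
  rw [hWE.adjCov_eq_cov_sub hB hD hE, sub_eq_zero] at hBD
  rw [hWDE.adjCov_eq_cov_sub hB hC hDE, sub_eq_zero] at hBC
  have hBDE : cov μ B (Fin.append D E) = cov μ B E * WE * cov μ E (Fin.append D E) :=
    cov_append_right_eq_mul hBD (hWE.cov_mul_mul_cov_self hB hE).symm
  have hEDE := hWDE.cov_comp_mul_mul_cov hDE hC (Fin.natAdd md)
  rw [show Fin.append D E ∘ Fin.natAdd md = E from funext (Fin.append_right D E)] at hEDE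
  rw [hWE.adjCov_eq_cov_sub hB hC hE, sub_eq_zero, hBC, hBDE, Matrix.mul_assoc, Matrix.mul_assoc,
    ← Matrix.mul_assoc (cov μ E _), hEDE, Matrix.mul_assoc]
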